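/- arXiv:2509.01571 — 6 statements merged into one kernel-verified Lean document; each statement's English description precedes it below -/
import Mathlib

section
/- For all natural numbers k ≥ 1 and every real number m ≥ 0, the tail of the Chebyshev coefficients of x^k satisfies the Chernoff-type bound: Σ_{j=0}^{⌊k/2⌋} [k − 2j > m] · 2^{1−k} · C(k,j) ≤ 2 · exp(−m²/(2k)), where the sum ranges over those j ∈ {0, …, ⌊k/2⌋} with k − 2j > m, and C(k,j) is the binomial coefficient. -/
open Finset

/-- Chernoff-type bound on the tail of the Chebyshev coefficients of `x ^ k`:
the total (unsigned) weight of the Chebyshev coefficients of `x^k` with index exceeding `m`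
is at most `2 * exp (-m² / (2k))`. -/
theorem chebyshev_coeff_tail_bound (k : ℕ) (hk : 1 ≤ k) (m : ℝ) (hm : 0 ≤ m) :
    (∑ j ∈ range (k / 2 + 1),
        if (k : ℝ) - 2 * j > m then (2 : ℝ) ^ (1 - (k : ℤ)) * (k.choose j : ℝ) else 0)
      ≤ 2 * Real.exp (-m ^ 2 / (2 * k)) := by
  have hk0 : (0:ℝ) < k := by exact_mod_cast hk
  set t : ℝ := m / k with ht
  have hts : 0 ≤ t := div_nonneg hm hk0.le
  set f : ℕ → ℝ := fun j =>
    (2:ℝ) ^ (1 - (k:ℤ)) * (k.choose j : ℝ) * Real.exp (t * (((k:ℝ) - 2*j) - m)) with hf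
  have hfnn : ∀ j, 0 ≤ f j := by
    intro j
    simp only [hf]
    positivity
  have h1 : (∑ j ∈ range (k / 2 + 1),
        if (k : ℝ) - 2 * j > m then (2 : ℝ) ^ (1 - (k : ℤ)) * (k.choose j : ℝ) else 0)
      ≤ ∑ j ∈ range (k + 1), f j := by
    have hsub : range (k / 2 + 1) ⊆ range (k + 1) := by
      apply range_subset_range.mpr
      omega
    refine le_trans (Finset.sum_le_sum ?_)
      (Finset.sum_le_sum_of_subset_of_nonneg hsub fun j _ _ => hfnn j)
    intro j _
    simp only [hf]
    split_ifs with h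
    · refine le_mul_of_one_le_right (by positivity) (Real.one_le_exp ?_)
      exact mul_nonneg hts (by linarith)
    · positivity
  have hbin : ∑ j ∈ range (k+1), (k.choose j : ℝ) * Real.exp (t * ((k:ℝ) - 2*j))
      = (Real.exp (-t) + Real.exp t) ^ k := by
    rw [add_pow]
    refine Finset.sum_congr rfl fun j hj => ?_
    have hjk : j ≤ k := Nat.lt_succ_iff.mp (mem_range.mp hj)
    have : Real.exp (-t) ^ j * Real.exp t ^ (k-j) = Real.exp (t * ((k:ℝ) - 2*j)) := by
      rw [← Real.exp_nat_mul, ← Real.exp_nat_mul, ← Real.exp_add]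
      congr 1
      push_cast [Nat.cast_sub hjk]
      ring
    rw [← this]; ring
  have h2 : ∑ j ∈ range (k + 1), f j
      = 2 * Real.cosh t ^ k * Real.exp (-(t*m)) := by
    have : ∀ j, f j = ((2:ℝ) ^ (1 - (k:ℤ)) * Real.exp (-(t*m)))
        * ((k.choose j : ℝ) * Real.exp (t * ((k:ℝ) - 2*j))) := by
      intro j
      simp only [hf]
      rw [show t*((k:ℝ)-2*j-m) = -(t*m) + t*((k:ℝ)-2*j) by ring, Real.exp_add]
      ring
    rw [Finset.sum_congr rfl fun j _ => this j, ← Finset.mul_sum, hbin]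
    have hcosh : Real.exp (-t) + Real.exp t = 2 * Real.cosh t := by
      rw [Real.cosh_eq]; ring
    rw [hcosh, mul_pow]
    have h2k : (2:ℝ) ^ (1 - (k:ℤ)) * (2:ℝ) ^ k = 2 := by
      rw [← zpow_natCast (2:ℝ) k, ← zpow_add₀ (by norm_num : (2:ℝ) ≠ 0)]
      norm_num
    calc (2:ℝ) ^ (1 - (k:ℤ)) * Real.exp (-(t*m)) * ((2:ℝ) ^ k * Real.cosh t ^ k)
        = ((2:ℝ) ^ (1 - (k:ℤ)) * (2:ℝ) ^ k) * Real.cosh t ^ k * Real.exp (-(t*m)) := by ring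
      _ = 2 * Real.cosh t ^ k * Real.exp (-(t*m)) := by rw [h2k]
  have h3 : 2 * Real.cosh t ^ k * Real.exp (-(t*m))
      ≤ 2 * Real.exp (-m ^ 2 / (2 * k)) := by
    have hc : Real.cosh t ^ k ≤ Real.exp (t^2/2) ^ k :=
      pow_le_pow_left₀ (Real.cosh_pos t).le (Real.cosh_le_exp_half_sq t) k
    have : Real.exp (t^2/2) ^ k * Real.exp (-(t*m)) = Real.exp (-m ^ 2 / (2 * k)) := by
      rw [← Real.exp_nat_mul, ← Real.exp_add]
      have hkne : (k:ℝ) ≠ 0 := hk0.ne'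
      congr 1
      rw [ht]
      field_simp
      ring
    calc 2 * Real.cosh t ^ k * Real.exp (-(t*m))
        ≤ 2 * Real.exp (t^2/2) ^ k * Real.exp (-(t*m)) := by
          have := Real.exp_pos (-(t*m))
          nlinarith [pow_nonneg (Real.cosh_pos t).le k]
      _ = 2 * Real.exp (-m ^ 2 / (2 * k)) := by rw [mul_assoc, this]
  linarith [h1, h2 ▸ h1, h3]
end

section
/- For every natural number k ≥ 1 and every real ε ∈ (0, 1), there exists a real polynomial p with natural degree at most ⌈√(2k·ln(2/ε))⌉ such that sup_{x ∈ [−1,1]} |x^k − p(x)| ≤ ε, and moreover p has the same parity as k, i.e., p(−x) = (−1)^k · p(x) for all real x. -/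
/-!
On `[-1, 1]` write `x = cos θ`. Expanding `(2 cos θ)^k = (e^{iθ} + e^{-iθ})^k` gives
`x^k = 2^{-k} ∑ⱼ C(k,j) T_{2j-k}(x)`, a polynomial of the parity of `k`. Keeping only the terms
with `|2j - k| ≤ d` costs at most `2^{-k} ∑_{|2j-k| > d} C(k,j)`, the probability that a sum of
`k` random signs exceeds `d` in absolute value, which the Chernoff bound (via
`cosh t ≤ exp (t²/2)`) makes at most `2 exp (-d²/(2k))`. This is `≤ ε` once `d² ≥ 2k ln(2/ε)`.
-/

open Polynomial Finset

theorem Complex.two_mul_cos_pow (k : ℕ) (z : ℂ) :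
    (2 * cos z) ^ k = ∑ j ∈ range (k + 1), (k.choose j : ℂ) * cos ((2 * j - k) * z) := by
  have hexp {a b : ℂ} {j : ℕ} (hj : j ≤ k) :
      exp (a * z * I) ^ j * exp (b * z * I) ^ (k - j) = exp ((j * a + (k - j) * b) * z * I) := by
    rw [← exp_nat_mul, ← exp_nat_mul, ← exp_add, Nat.cast_sub hj]
    ring_nf
  refine mul_left_cancel₀ (two_ne_zero (α := ℂ)) ?_
  calc 2 * (2 * cos z) ^ k
      = (exp (1 * z * I) + exp (-1 * z * I)) ^ k + (exp (-1 * z * I) + exp (1 * z * I)) ^ k := by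
        rw [add_comm (exp (-1 * z * I)), one_mul, neg_one_mul, ← two_cos]; ring
    _ = _ := by
        rw [add_pow, add_pow, ← sum_add_distrib, mul_sum]
        refine sum_congr rfl fun j hj => ?_
        have hjk := Nat.lt_succ_iff.mp (mem_range.mp hj)
        rw [hexp hjk, hexp hjk, mul_left_comm, two_cos]
        ring_nf

namespace Real

theorem two_mul_cos_pow (k : ℕ) (θ : ℝ) :
    (2 * cos θ) ^ k = ∑ j ∈ range (k + 1), (k.choose j : ℝ) * cos ((2 * j - k) * θ) := by
  exact_mod_cast Complex.two_mul_cos_pow k θ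

theorem two_mul_cosh_pow (k : ℕ) (t : ℝ) :
    (2 * cosh t) ^ k = ∑ j ∈ range (k + 1), (k.choose j : ℝ) * cosh ((2 * j - k) * t) := by
  have h := Complex.two_mul_cos_pow k (t * Complex.I)
  simp only [← mul_assoc, Complex.cos_mul_I] at h
  exact_mod_cast h

theorem exp_abs_le_two_mul_cosh (x : ℝ) : exp |x| ≤ 2 * cosh x := by
  rw [cosh_eq]
  rcases abs_cases x with ⟨h, -⟩ | ⟨h, -⟩ <;> rw [h] <;> linarith [exp_pos x, exp_pos (-x)]

theorem cosh_pow_le_exp (k : ℕ) (t : ℝ) : cosh t ^ k ≤ exp (k * t ^ 2 / 2) := by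
  rw [mul_div_assoc, exp_nat_mul]
  exact pow_le_pow_left₀ (cosh_pos t).le (cosh_le_exp_half_sq t) k

end Real

open Real

theorem sum_choose_filter_lt_abs_le_mul_exp (k : ℕ) (d : ℝ) {t : ℝ} (ht : 0 ≤ t) :
    ∑ j ∈ range (k + 1) with d < |2 * (j : ℕ) - (k : ℝ)|, (k.choose j : ℝ)
      ≤ 2 * (2 * cosh t) ^ k * exp (-(t * d)) := by
  -- Chernoff: the indicator of `d < |m|` is at most `2 cosh (t m) · exp (-t d)`.
  have hindicator (j : ℕ) (hj : d < |2 * j - (k : ℝ)|) :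
      (k.choose j : ℝ) ≤ k.choose j * (2 * cosh ((2 * j - k) * t) * exp (-(t * d))) := by
    refine le_mul_of_one_le_right (by positivity) ?_
    calc (1 : ℝ) = exp (t * d) * exp (-(t * d)) := by rw [← exp_add]; simp
      _ ≤ 2 * cosh ((2 * j - k) * t) * exp (-(t * d)) := by
        gcongr
        calc exp (t * d) ≤ exp |(2 * j - k) * t| := by
              rw [abs_mul, abs_of_nonneg ht, mul_comm]; gcongr
          _ ≤ _ := exp_abs_le_two_mul_cosh _
  calc ∑ j ∈ range (k + 1) with d < |2 * (j : ℕ) - (k : ℝ)|, (k.choose j : ℝ)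
      ≤ ∑ j ∈ range (k + 1), k.choose j * (2 * cosh ((2 * j - k) * t) * exp (-(t * d))) :=
        (sum_le_sum fun j hj => hindicator j (mem_filter.mp hj).2).trans
          (sum_le_sum_of_subset_of_nonneg (filter_subset _ _) fun _ _ _ => by positivity)
    _ = 2 * (2 * cosh t) ^ k * exp (-(t * d)) := by
        rw [two_mul_cosh_pow, mul_sum, sum_mul]
        exact sum_congr rfl fun j _ => by ring

theorem sum_choose_filter_lt_abs_le (k : ℕ) (hk : 0 < k) {d : ℝ} (hd : 0 ≤ d) :
    ∑ j ∈ range (k + 1) with d < |2 * (j : ℕ) - (k : ℝ)|, (k.choose j : ℝ)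
      ≤ 2 ^ (k + 1) * exp (-d ^ 2 / (2 * k)) := by
  calc _ ≤ 2 * (2 * cosh (d / k)) ^ k * exp (-(d / k * d)) :=
        sum_choose_filter_lt_abs_le_mul_exp k d (by positivity)
    _ ≤ 2 * 2 ^ k * exp (k * (d / k) ^ 2 / 2) * exp (-(d / k * d)) := by
        rw [mul_pow, ← mul_assoc]
        gcongr
        exact cosh_pow_le_exp k _
    _ = 2 ^ (k + 1) * exp (-d ^ 2 / (2 * k)) := by
        rw [mul_assoc, ← exp_add, ← pow_succ', show (k : ℝ) * (d / k) ^ 2 / 2 + -(d / k * d)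
          = -d ^ 2 / (2 * k) by field_simp; ring]

/-- The terms of degree at most `d` of the expansion `x ^ k = 2⁻ᵏ ∑ⱼ C(k,j) T_{2j-k}(x)`. -/
noncomputable def truncatedChebyshevPow (k d : ℕ) : ℝ[X] :=
  ∑ j ∈ range (k + 1) with |2 * (j : ℕ) - (k : ℝ)| ≤ d,
    C ((k.choose j : ℝ) / 2 ^ k) * Chebyshev.T ℝ (2 * j - k)

theorem natDegree_truncatedChebyshevPow_le (k d : ℕ) :
    (truncatedChebyshevPow k d).natDegree ≤ d := by
  refine natDegree_sum_le_of_forall_le _ _ fun j hj => (natDegree_C_mul_le _ _).trans ?_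
  rw [Chebyshev.natDegree_T, ← Nat.cast_le (α := ℝ), Nat.cast_natAbs]
  exact_mod_cast (mem_filter.mp hj).2

theorem truncatedChebyshevPow_eval_neg (k d : ℕ) (x : ℝ) :
    (truncatedChebyshevPow k d).eval (-x) = (-1) ^ k * (truncatedChebyshevPow k d).eval x := by
  simp only [truncatedChebyshevPow, eval_finsetSum, mul_sum, eval_mul, eval_C,
    Chebyshev.T_eval_neg]
  refine sum_congr rfl fun j _ => ?_
  have : ((2 * j - k : ℤ).negOnePow : ℝ) = (-1) ^ k := by
    rw [Int.negOnePow_sub, Int.negOnePow_two_mul, one_mul]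
    simp
  rw [this]
  ring

theorem abs_pow_sub_eval_truncatedChebyshevPow_le (k d : ℕ) {x : ℝ} (hx : x ∈ Set.Icc (-1) 1) :
    |x ^ k - (truncatedChebyshevPow k d).eval x|
      ≤ (∑ j ∈ range (k + 1) with (d : ℝ) < |2 * (j : ℕ) - (k : ℝ)|, (k.choose j : ℝ)) / 2 ^ k := by
  obtain ⟨θ, rfl⟩ : ∃ θ, cos θ = x := ⟨arccos x, cos_arccos hx.1 hx.2⟩
  have hpow : cos θ ^ k =
      (∑ j ∈ range (k + 1), (k.choose j : ℝ) * cos ((2 * j - k) * θ)) / 2 ^ k := by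
    rw [← two_mul_cos_pow, mul_pow, mul_div_cancel_left₀ _ (by positivity)]
  have heval : (truncatedChebyshevPow k d).eval (cos θ) =
      (∑ j ∈ range (k + 1) with |2 * (j : ℕ) - (k : ℝ)| ≤ d,
        (k.choose j : ℝ) * cos ((2 * j - k) * θ)) / 2 ^ k := by
    simp only [truncatedChebyshevPow, eval_finsetSum, eval_mul, eval_C, Chebyshev.T_real_cos,
      sum_div]
    refine sum_congr rfl fun j _ => ?_
    push_cast
    ring
  rw [hpow, heval, ← sub_div,
    ← sum_filter_add_sum_filter_not _ (fun j : ℕ => |2 * j - (k : ℝ)| ≤ d), add_sub_cancel_left,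
    abs_div, abs_of_pos (by positivity : (0 : ℝ) < 2 ^ k)]
  simp only [not_le]
  gcongr
  refine (abs_sum_le_sum_abs _ _).trans (sum_le_sum fun j _ => ?_)
  rw [abs_mul, Nat.abs_cast]
  exact mul_le_of_le_one_right (by positivity) (abs_cos_le_one _)

theorem exists_polynomial_approx_pow_general (k : ℕ) (hk : 1 ≤ k) (ε : ℝ) (hε0 : 0 < ε) :
    ∃ p : ℝ[X],
      p.natDegree ≤ ⌈Real.sqrt (2 * k * Real.log (2 / ε))⌉₊ ∧
      (∀ x ∈ Set.Icc (-1 : ℝ) 1, |x ^ k - p.eval x| ≤ ε) ∧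
      (∀ x : ℝ, p.eval (-x) = (-1 : ℝ) ^ k * p.eval x) := by
  set d := ⌈√(2 * k * log (2 / ε))⌉₊
  refine ⟨truncatedChebyshevPow k d, natDegree_truncatedChebyshevPow_le k d, fun x hx => ?_,
    truncatedChebyshevPow_eval_neg k d⟩
  have hd : 2 * k * log (2 / ε) ≤ (d : ℝ) ^ 2 := by
    rcases le_total 0 (2 * k * log (2 / ε)) with h | h
    · calc _ = √(2 * k * log (2 / ε)) ^ 2 := (sq_sqrt h).symm
        _ ≤ _ := by gcongr; exact Nat.le_ceil _
    · exact h.trans (sq_nonneg _)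
  calc |x ^ k - (truncatedChebyshevPow k d).eval x|
      ≤ (∑ j ∈ range (k + 1) with (d : ℝ) < |2 * (j : ℕ) - (k : ℝ)|, (k.choose j : ℝ)) / 2 ^ k :=
        abs_pow_sub_eval_truncatedChebyshevPow_le k d hx
    _ ≤ 2 ^ (k + 1) * exp (-d ^ 2 / (2 * k)) / 2 ^ k := by
        gcongr
        exact sum_choose_filter_lt_abs_le k hk d.cast_nonneg
    _ = 2 * exp (-d ^ 2 / (2 * k)) := by rw [pow_succ']; field_simp
    _ ≤ 2 * exp (-log (2 / ε)) := by
        gcongr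
        rw [neg_div, neg_le_neg_iff, le_div_iff₀ (by positivity)]
        linarith
    _ = ε := by rw [exp_neg, exp_log (by positivity)]; field_simp

/-- For every `k ≥ 1` and `ε ∈ (0,1)` there is a real polynomial of degree at most
`⌈√(2k·ln(2/ε))⌉` that uniformly `ε`-approximates `x ^ k` on `[-1, 1]` and has the same
parity as `k`. -/
theorem exists_polynomial_approx_pow (k : ℕ) (hk : 1 ≤ k) (ε : ℝ) (hε0 : 0 < ε) (hε1 : ε < 1) :
    ∃ p : ℝ[X],
      p.natDegree ≤ ⌈Real.sqrt (2 * k * Real.log (2 / ε))⌉₊ ∧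
      (∀ x ∈ Set.Icc (-1 : ℝ) 1, |x ^ k - p.eval x| ≤ ε) ∧
      (∀ x : ℝ, p.eval (-x) = (-1 : ℝ) ^ k * p.eval x) :=
  exists_polynomial_approx_pow_general k hk ε hε0
end

section
/- There exists a constant c > 0 such that for every integer k ≥ 2, every real ε with exp(−k) ≤ ε ≤ 1/4, and every real polynomial p satisfying sup_{x ∈ [−1,1]} |x^k − p(x)| ≤ ε, the degree d of p satisfies d ≥ c · √(k · ln(1/ε)). -/
/-!
Rescaling `x ↦ x / cosh b` turns an `ε`-approximation `p` of `x ^ k` into a polynomial bounded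
by `(cosh b)⁻ᵏ + ε` on `[-1, 1]` whose value at `cosh b` is `p 1 ≥ 1 - ε`. Chebyshev's extremal
inequality `|q (cosh b)| ≤ ‖q‖ cosh (deg q · b)` then gives `1 - ε ≤ 2ε e^{d b}` as soon as
`cosh b ≥ ε^{-1/k}`, which holds for `b = 2 √(log (1/ε) / k)` because `ε ≥ e^{-k}`.
Hence `d b ≥ log (1/ε) / 4`, i.e. `d ≥ √(k log (1/ε)) / 8`.
-/

open Polynomial Real

namespace Real

theorem one_add_sq_div_two_le_cosh (x : ℝ) : 1 + x ^ 2 / 2 ≤ cosh x := by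
  rw [cosh_eq_tsum]
  have := x.hasSum_cosh.summable.sum_le_tsum (Finset.range 2)
    fun i _ => div_nonneg (by rw [pow_mul]; positivity) (Nat.cast_nonneg _)
  simpa [Finset.sum_range_succ] using this

theorem exp_le_one_add_two_mul {u : ℝ} (hu₀ : 0 ≤ u) (hu₁ : u ≤ 1) : exp u ≤ 1 + 2 * u := by
  refine (exp_le_two_add_div_two_sub hu₀ (by linarith)).trans ?_
  rw [div_le_iff₀ (by linarith)]
  nlinarith

theorem exp_le_cosh_two_mul_sqrt {u : ℝ} (hu₀ : 0 ≤ u) (hu₁ : u ≤ 1) :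
    exp u ≤ cosh (2 * √u) := by
  calc exp u ≤ 1 + 2 * u := exp_le_one_add_two_mul hu₀ hu₁
    _ = 1 + (2 * √u) ^ 2 / 2 := by rw [mul_pow, sq_sqrt hu₀]; ring
    _ ≤ cosh (2 * √u) := one_add_sq_div_two_le_cosh _

theorem cosh_le_exp_abs (x : ℝ) : cosh x ≤ exp |x| := by
  rw [← cosh_abs, cosh_eq]
  have : exp (-|x|) ≤ exp |x| := exp_le_exp.2 (by linarith [abs_nonneg x])
  linarith

theorem log_one_div_div_four_le_of_one_sub_le_mul_exp {ε X : ℝ} (hε₀ : 0 < ε) (hε : ε ≤ 1 / 4)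
    (h : 1 - ε ≤ 2 * ε * exp X) : log (1 / ε) / 4 ≤ X := by
  have hX : 3 / (8 * ε) ≤ exp X := by
    rw [div_le_iff₀ (by positivity)]
    linarith
  have h4 : exp (log (1 / ε) / 4) ^ 4 ≤ exp X ^ 4 := calc
    exp (log (1 / ε) / 4) ^ 4 = 1 / ε := by
      rw [← exp_nat_mul, Nat.cast_ofNat, mul_div_cancel₀ _ four_ne_zero, exp_log (by positivity)]
    _ ≤ (3 / (8 * ε)) ^ 4 := by
      rw [div_pow, div_le_div_iff₀ hε₀ (by positivity)]
      nlinarith [pow_le_pow_left₀ hε₀.le hε 3]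
    _ ≤ exp X ^ 4 := pow_le_pow_left₀ (by positivity) hX 4
  exact exp_le_exp.1 (le_of_pow_le_pow_left₀ four_ne_zero (exp_pos X).le h4)

end Real

namespace Polynomial

theorem abs_eval_cosh_le {P : ℝ[X]} {M : ℝ} (hM : 0 < M)
    (hP : ∀ x ∈ Set.Icc (-1 : ℝ) 1, |P.eval x| ≤ M) (b : ℝ) :
    |P.eval (cosh b)| ≤ M * cosh (P.natDegree * b) := by
  have hT : ∀ Q : ℝ[X], Q.degree ≤ P.natDegree → (∀ x ∈ Set.Icc (-1 : ℝ) 1, |Q.eval x| ≤ 1) →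
      Q.eval (cosh b) ≤ cosh (P.natDegree * b) := fun Q hQ hQ1 => by
    -- `Q ≤ T_n` on `[1, ∞)`: the `0`-th derivative case of Chebyshev's extremal property
    simpa using
      Chebyshev.eval_iterate_derivative_le_of_forall_abs_le_one (k := 0) (one_le_cosh b) hQ hQ1
  have hdeg : (C M⁻¹ * P).degree ≤ P.natDegree :=
    degree_le_of_natDegree_le (natDegree_C_mul_le _ _)
  have hbound : ∀ x ∈ Set.Icc (-1 : ℝ) 1, |(C M⁻¹ * P).eval x| ≤ 1 := fun x hx => by
    rw [eval_mul, eval_C, abs_mul, abs_inv, abs_of_pos hM, inv_mul_le_one₀ hM]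
    exact hP x hx
  have h₁ := hT _ hdeg hbound
  have h₂ := hT (-(C M⁻¹ * P)) (by rwa [degree_neg]) (by simpa using hbound)
  simp only [eval_neg, eval_mul, eval_C] at h₁ h₂
  have h : |M⁻¹ * P.eval (cosh b)| ≤ cosh (P.natDegree * b) := abs_le.2 ⟨by linarith, h₁⟩
  rwa [abs_mul, abs_inv, abs_of_pos hM, inv_mul_le_iff₀ hM] at h

theorem abs_eval_comp_C_mul_X_le {p : ℝ[X]} {k : ℕ} {ε r : ℝ}
    (hp : ∀ x ∈ Set.Icc (-1 : ℝ) 1, |x ^ k - p.eval x| ≤ ε) (hr₀ : 0 ≤ r) (hr₁ : r ≤ 1)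
    {y : ℝ} (hy : y ∈ Set.Icc (-1 : ℝ) 1) : |(p.comp (C r * X)).eval y| ≤ r ^ k + ε := by
  have hry : |r * y| ≤ r := by
    rw [abs_mul, abs_of_nonneg hr₀]
    exact mul_le_of_le_one_right hr₀ (abs_le.2 hy)
  have hpow : |(r * y) ^ k| ≤ r ^ k := by
    rw [abs_pow]
    exact pow_le_pow_left₀ (abs_nonneg _) hry k
  have hmem : r * y ∈ Set.Icc (-1 : ℝ) 1 := abs_le.1 (hry.trans hr₁)
  calc |(p.comp (C r * X)).eval y| = |(r * y) ^ k - ((r * y) ^ k - p.eval (r * y))| := by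
        simp
    _ ≤ |(r * y) ^ k| + |(r * y) ^ k - p.eval (r * y)| := abs_sub _ _
    _ ≤ r ^ k + ε := add_le_add hpow (hp _ hmem)

theorem one_sub_le_mul_exp_of_abs_pow_sub_eval_le {p : ℝ[X]} {k : ℕ} {ε b : ℝ}
    (hp : ∀ x ∈ Set.Icc (-1 : ℝ) 1, |x ^ k - p.eval x| ≤ ε) (hb : 0 ≤ b) :
    1 - ε ≤ ((cosh b)⁻¹ ^ k + ε) * exp (p.natDegree * b) := by
  set r := (cosh b)⁻¹
  have hr₀ : 0 < r := inv_pos.2 (cosh_pos b)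
  have hε : 0 ≤ ε := (abs_nonneg _).trans (hp 0 (by norm_num))
  have hdeg : (p.comp (C r * X)).natDegree = p.natDegree := by
    rw [natDegree_comp, natDegree_C_mul_X r hr₀.ne', mul_one]
  have hgrowth := abs_eval_cosh_le (by positivity)
    (fun y hy => abs_eval_comp_C_mul_X_le hp hr₀.le (inv_le_one_of_one_le₀ (one_le_cosh b)) hy) b
  rw [hdeg, eval_comp, eval_mul, eval_C, eval_X, inv_mul_cancel₀ (cosh_pos b).ne'] at hgrowth
  have hp₁ : 1 - ε ≤ p.eval 1 := by
    have := hp 1 (by norm_num)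
    rw [one_pow] at this
    linarith [abs_le.1 this]
  calc 1 - ε ≤ |p.eval 1| := hp₁.trans (le_abs_self _)
    _ ≤ (r ^ k + ε) * cosh (p.natDegree * b) := hgrowth
    _ ≤ (r ^ k + ε) * exp (p.natDegree * b) := by
      gcongr
      exact (cosh_le_exp_abs _).trans_eq (by rw [abs_of_nonneg (by positivity)])

end Polynomial

/-- Degree lower bound for uniform polynomial approximation of `x ^ k` on `[-1, 1]`:
there is a universal constant `c > 0` such that for `k ≥ 2` and `exp(-k) ≤ ε ≤ 1/4`, any real
polynomial `ε`-approximating `x ^ k` uniformly on `[-1, 1]` has degree at least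
`c · √(k · ln(1/ε))`. -/
theorem polynomial_approx_pow_degree_lower_bound :
    ∃ c : ℝ, 0 < c ∧
      ∀ k : ℕ, 2 ≤ k →
        ∀ ε : ℝ, Real.exp (-(k : ℝ)) ≤ ε → ε ≤ 1 / 4 →
          ∀ p : ℝ[X], (∀ x ∈ Set.Icc (-1 : ℝ) 1, |x ^ k - p.eval x| ≤ ε) →
            c * Real.sqrt ((k : ℝ) * Real.log (1 / ε)) ≤ (p.natDegree : ℝ) := by
  refine ⟨1 / 8, by norm_num, fun k hk ε hεk hε p hp => ?_⟩
  have hε₀ : 0 < ε := (exp_pos _).trans_le hεk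
  have hk₀ : (0 : ℝ) < k := Nat.cast_pos.2 (by omega)
  set L := log (1 / ε) with hL
  have hL₀ : 0 < L := log_pos (by rw [lt_one_div one_pos hε₀]; linarith)
  have hLk : L ≤ k := by
    rw [hL, one_div, log_inv, neg_le]
    exact (le_log_iff_exp_le hε₀).2 hεk
  set u := L / k with hu
  have hu₀ : 0 < u := div_pos hL₀ hk₀
  have hscale : (cosh (2 * √u))⁻¹ ^ k ≤ ε := calc
    (cosh (2 * √u))⁻¹ ^ k ≤ (exp u)⁻¹ ^ k := by
      gcongr
      exact exp_le_cosh_two_mul_sqrt hu₀.le ((div_le_one hk₀).2 hLk)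
    _ = ε := by
      rw [← exp_neg, ← exp_nat_mul, mul_neg, mul_div_cancel₀ _ hk₀.ne', hL, exp_neg,
        exp_log (by positivity), one_div, inv_inv]
  have hgrowth := one_sub_le_mul_exp_of_abs_pow_sub_eval_le hp (b := 2 * √u) (by positivity)
  have hLd := log_one_div_div_four_le_of_one_sub_le_mul_exp hε₀ hε
    (hgrowth.trans (by gcongr; linarith))
  have hLu : √(k * L) * √u = L := by
    rw [← sqrt_mul (by positivity), show k * L * u = L ^ 2 by rw [hu]; field_simp, sqrt_sq hL₀.le]
  refine le_of_mul_le_mul_right ?_ (sqrt_pos.2 hu₀)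
  linarith
end

section
/- Let ρ be an N×N complex positive semidefinite matrix with trace 1, let O be any N×N complex matrix, let k ≥ 1 be a natural number, and let p be a real polynomial with sup_{x ∈ [0,1]} |p(x) − x^{k−1}| ≤ η. Then |Tr(ρ · p(ρ) · O) − Tr(ρ^k · O)| ≤ ‖O‖ · η, where p(ρ) is the polynomial functional calculus applied to ρ and ‖O‖ is the ℓ²→ℓ² operator norm. -/
open scoped ComplexOrder

/-- The ℓ²→ℓ² operator norm (largest singular value) of a complex `N × N` matrix. -/
noncomputable def l2OpNorm {N : ℕ} (M : Matrix (Fin N) (Fin N) ℂ) : ℝ :=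
  ‖LinearMap.toContinuousLinearMap (Matrix.toEuclideanLin M)‖

/-!
Writing `ρ p(ρ) - ρ^k = f(ρ)` with `f(x) = x (p(x) - x^(k-1))` and diagonalising `ρ = U D U*`,
the trace becomes `∑ᵢ f(λᵢ) (U* O U)ᵢᵢ`. Each diagonal entry of `U* O U` is bounded by its operator
norm `‖O‖`, and `|f(λᵢ)| ≤ λᵢ η` because the eigenvalues `λᵢ` lie in `[0, 1]`; they sum to `1`.
-/

open scoped Matrix.Norms.L2Operator

lemma l2OpNorm_eq_norm {N : ℕ} (M : Matrix (Fin N) (Fin N) ℂ) : l2OpNorm M = ‖M‖ := rfl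

namespace Matrix

variable {m n 𝕜 : Type*} [Fintype m] [Fintype n] [DecidableEq n] [RCLike 𝕜]

lemma norm_apply_le_l2_opNorm (A : Matrix m n 𝕜) (i : m) (j : n) : ‖A i j‖ ≤ ‖A‖ := by
  set e := EuclideanSpace.single j (1 : 𝕜)
  have hcol : (EuclideanSpace.equiv m 𝕜).symm (A *ᵥ e) i = A i j := by
    simp [e, mulVec_single]
  calc ‖A i j‖ = ‖(EuclideanSpace.equiv m 𝕜).symm (A *ᵥ e) i‖ := by rw [hcol]
    _ ≤ ‖(EuclideanSpace.equiv m 𝕜).symm (A *ᵥ e)‖ := PiLp.norm_apply_le _ i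
    _ ≤ ‖A‖ * ‖e‖ := A.l2_opNorm_mulVec e
    _ = ‖A‖ := by simp [e]

lemma trace_diagonal_mul (d : n → 𝕜) (B : Matrix n n 𝕜) :
    (diagonal d * B).trace = ∑ i, d i * B i i := by
  simp [trace, diagonal_mul]

lemma norm_trace_conj_diagonal_mul_le (U : unitary (Matrix n n 𝕜)) (d : n → 𝕜)
    (O : Matrix n n 𝕜) :
    ‖(Unitary.conjStarAlgAut 𝕜 _ U (diagonal d) * O).trace‖ ≤ (∑ i, ‖d i‖) * ‖O‖ := by
  set B := star (U : Matrix n n 𝕜) * O * U with hBdef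
  have htrace : (Unitary.conjStarAlgAut 𝕜 _ U (diagonal d) * O).trace = ∑ i, d i * B i i := by
    rw [Unitary.conjStarAlgAut_apply, Matrix.mul_assoc, Matrix.mul_assoc, trace_mul_comm,
      ← trace_diagonal_mul]
    simp only [B, Matrix.mul_assoc]
  have hB : ‖B‖ = ‖O‖ := by
    rw [hBdef, Matrix.mul_assoc, ← Unitary.coe_star, CStarRing.norm_coe_unitary_mul,
      CStarRing.norm_mul_coe_unitary]
  rw [htrace, Finset.sum_mul]
  refine (norm_sum_le _ _).trans (Finset.sum_le_sum fun i _ => ?_)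
  rw [norm_mul, ← hB]
  gcongr
  exact B.norm_apply_le_l2_opNorm i i

lemma IsHermitian.norm_trace_cfc_mul_le {A : Matrix n n 𝕜} (hA : A.IsHermitian) (f : ℝ → ℝ)
    (O : Matrix n n 𝕜) :
    ‖(cfc f A * O).trace‖ ≤ (∑ i, |f (hA.eigenvalues i)|) * ‖O‖ := by
  rw [hA.cfc_eq, IsHermitian.cfc]
  refine (norm_trace_conj_diagonal_mul_le _ _ O).trans_eq ?_
  simp

lemma IsHermitian.sum_eigenvalues_of_trace_eq_one {ρ : Matrix n n 𝕜} (hρ : ρ.IsHermitian)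
    (htr : ρ.trace = 1) : ∑ i, hρ.eigenvalues i = 1 := by
  have h : ((∑ i, hρ.eigenvalues i : ℝ) : 𝕜) = 1 := by
    rw [← htr, hρ.trace_eq_sum_eigenvalues, RCLike.ofReal_sum]
  exact_mod_cast h

lemma PosSemidef.eigenvalues_le_one_of_trace_eq_one {ρ : Matrix n n 𝕜} (hρ : ρ.PosSemidef)
    (htr : ρ.trace = 1) (i : n) : hρ.1.eigenvalues i ≤ 1 :=
  hρ.1.sum_eigenvalues_of_trace_eq_one htr ▸
    Finset.single_le_sum (fun j _ => hρ.eigenvalues_nonneg j) (Finset.mem_univ i)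

end Matrix

/-- If `ρ` is a density matrix, `O` an arbitrary matrix, `k ≥ 1`, and `p` a real polynomial
with `sup_{x ∈ [0,1]} |p(x) - x^(k-1)| ≤ η`, then
`|Tr(ρ p(ρ) O) - Tr(ρ^k O)| ≤ ‖O‖ · η`. -/
theorem trace_poly_approx_nonlinear_property {N : ℕ} (ρ O : Matrix (Fin N) (Fin N) ℂ)
    (hρ : ρ.PosSemidef) (htr : ρ.trace = 1) (k : ℕ) (hk : 1 ≤ k)
    (p : Polynomial ℝ) (η : ℝ)
    (hp : ∀ x ∈ Set.Icc (0 : ℝ) 1, |p.eval x - x ^ (k - 1)| ≤ η) :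
    ‖(ρ * Polynomial.aeval ρ p * O).trace - (ρ ^ k * O).trace‖ ≤ l2OpNorm O * η := by
  set f : ℝ → ℝ := fun x => x * (p.eval x - x ^ (k - 1))
  have hf : ρ * Polynomial.aeval ρ p - ρ ^ k = cfc f ρ := by
    have hfX : f = (Polynomial.X * (p - Polynomial.X ^ (k - 1))).eval := by
      funext x
      simp [f]
    rw [hfX, cfc_polynomial _ _ hρ.isHermitian.isSelfAdjoint, map_mul, map_sub, Polynomial.aeval_X,
      map_pow, Polynomial.aeval_X, mul_sub, ← pow_succ', Nat.sub_add_cancel hk]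
  set ev := hρ.isHermitian.eigenvalues
  calc ‖(ρ * Polynomial.aeval ρ p * O).trace - (ρ ^ k * O).trace‖ = ‖(cfc f ρ * O).trace‖ := by
        rw [← Matrix.trace_sub, ← Matrix.sub_mul, hf]
    _ ≤ (∑ i, |f (ev i)|) * ‖O‖ := hρ.isHermitian.norm_trace_cfc_mul_le f O
    _ ≤ (∑ i, ev i * η) * ‖O‖ := by
        gcongr with i
        have hev : ev i ∈ Set.Icc (0 : ℝ) 1 :=
          ⟨hρ.eigenvalues_nonneg i, hρ.eigenvalues_le_one_of_trace_eq_one htr i⟩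
        rw [abs_mul, abs_of_nonneg hev.1]
        exact mul_le_mul_of_nonneg_left (hp _ hev) hev.1
    _ = l2OpNorm O * η := by
        rw [← Finset.sum_mul, hρ.isHermitian.sum_eigenvalues_of_trace_eq_one htr, one_mul,
          mul_comm, l2OpNorm_eq_norm]
end

section
/- Let U be a unitary matrix indexed by (Fin N) ⊕ (Fin N) over ℂ, and let M be its upper-left N×N corner block, M i j = U (inl i) (inl j). Let ψ ∈ ℂ^N be a unit vector and set φ = (ψ, 0) ∈ ℂ^N ⊕ ℂ^N. Then (1/4)·‖φ + (−i)·(U·φ)‖² = (1 + Im⟨ψ, M·ψ⟩)/2, where ⟨·,·⟩ is the standard Hermitian inner product and ‖·‖ the ℓ² norm. (This is the success probability of the Hadamard test with an extra S† phase gate, which extracts the imaginary part of ⟨ψ, Mψ⟩.) -/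
/-!
Since `U` is unitary and `φ = (ψ, 0)`, both `φ` and `Uφ` are unit vectors, so expanding
`‖φ - i Uφ‖²` leaves `2 + 2 Im⟨φ, Uφ⟩`; and `⟨φ, Uφ⟩` only sees the upper-left block of `U`,
giving `⟨ψ, Mψ⟩`.
-/

open Matrix

theorem Matrix.norm_toEuclideanLin_of_mem_unitaryGroup {𝕜 n : Type*} [RCLike 𝕜] [Fintype n]
    [DecidableEq n] {U : Matrix n n 𝕜} (hU : U ∈ unitaryGroup n 𝕜) (x : EuclideanSpace 𝕜 n) :
    ‖toEuclideanLin U x‖ = ‖x‖ := by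
  rw [← coe_toEuclideanCLM_eq_toEuclideanLin]
  exact ContinuousLinearMap.norm_map_of_mem_unitary (Unitary.map_mem toEuclideanCLM hU) x

theorem norm_add_neg_I_smul_sq {E : Type*} [NormedAddCommGroup E] [InnerProductSpace ℂ E]
    (x y : E) :
    ‖x + (-Complex.I) • y‖ ^ 2 = ‖x‖ ^ 2 + 2 * (inner ℂ x y).im + ‖y‖ ^ 2 := by
  rw [norm_add_sq (𝕜 := ℂ), inner_smul_right, norm_smul, norm_neg, Complex.norm_I, one_mul]
  simp

section SumInl

variable {𝕜 m n : Type*} [RCLike 𝕜] [Fintype m] [Fintype n]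
  {ψ : EuclideanSpace 𝕜 m} {φ : EuclideanSpace 𝕜 (m ⊕ n)}

theorem EuclideanSpace.norm_eq_of_sum_inl (hl : ∀ i, φ (Sum.inl i) = ψ i)
    (hr : ∀ i, φ (Sum.inr i) = 0) : ‖φ‖ = ‖ψ‖ := by
  simp [EuclideanSpace.norm_eq, Fintype.sum_sum_type, hl, hr]

theorem Matrix.inner_toEuclideanLin_of_sum_inl [DecidableEq m] [DecidableEq n]
    (U : Matrix (m ⊕ n) (m ⊕ n) 𝕜)
    (hl : ∀ i, φ (Sum.inl i) = ψ i) (hr : ∀ i, φ (Sum.inr i) = 0) :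
    inner 𝕜 φ (toEuclideanLin U φ) = inner 𝕜 ψ (toEuclideanLin U.toBlocks₁₁ ψ) := by
  simp [PiLp.inner_apply, toLpLin_apply, mulVec, dotProduct, Fintype.sum_sum_type, hl, hr,
    toBlocks₁₁]

end SumInl

/-- Hadamard test with an extra `S†` phase gate (imaginary part): for a unitary `U` on
`ℂ^N ⊕ ℂ^N` with upper-left block `M`, a unit vector `ψ ∈ ℂ^N` and `φ = (ψ, 0)`,
`(1/4)·‖φ + (−i)·Uφ‖² = (1 + Im⟨ψ, Mψ⟩)/2`. -/
theorem hadamard_test_prob_imag {N : ℕ}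
    (U : Matrix (Fin N ⊕ Fin N) (Fin N ⊕ Fin N) ℂ)
    (hU : U ∈ Matrix.unitaryGroup (Fin N ⊕ Fin N) ℂ)
    (M : Matrix (Fin N) (Fin N) ℂ) (hM : ∀ i j, M i j = U (Sum.inl i) (Sum.inl j))
    (ψ : EuclideanSpace ℂ (Fin N)) (hψ : ‖ψ‖ = 1)
    (φ : EuclideanSpace ℂ (Fin N ⊕ Fin N))
    (hφl : ∀ i, φ (Sum.inl i) = ψ i) (hφr : ∀ i, φ (Sum.inr i) = 0) :
    (1 / 4 : ℝ) * ‖φ + (-Complex.I) • Matrix.toEuclideanLin U φ‖ ^ 2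
      = (1 + (inner ℂ ψ (Matrix.toEuclideanLin M ψ) : ℂ).im) / 2 := by
  have hMU : M = U.toBlocks₁₁ := Matrix.ext hM
  have hφ : ‖φ‖ = 1 := (EuclideanSpace.norm_eq_of_sum_inl hφl hφr).trans hψ
  rw [norm_add_neg_I_smul_sq, norm_toEuclideanLin_of_mem_unitaryGroup hU, hφ,
    inner_toEuclideanLin_of_sum_inl U hφl hφr, hMU]
  ring
end

section
/- Let N ≥ 1 and k ≥ 1 be natural numbers, and let ρ, O be N×N complex matrices. On the index set Fin k → Fin N, define: the k-fold tensor power ρ^{⊗k} by (ρ^{⊗k}) f g = ∏_{t ∈ Fin k} ρ (f t) (g t); the matrix O ⊗ I^{⊗(k−1)} by (O⊗I) f g = O (f 0) (g 0) · ∏_{t ≠ 0} [f t = g t]; and the cyclic permutation matrix P_k as the permutation matrix of the cyclic shift sending the basis vector indexed by (a₁, a₂, …, a_k) to the basis vector indexed by (a_k, a₁, …, a_{k−1}). Then Tr(P_k · ρ^{⊗k} · (O ⊗ I^{⊗(k−1)})) = Tr(ρ^k · O). -/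
open Finset

/-- auxiliary chain of vertices `b, x 0, …, x (n-1), a` used for the path-sum expansion. -/
def swapChain {N n : ℕ} (a b : Fin N) (x : Fin n → Fin N) : Fin (n + 2) → Fin N :=
  Fin.cons b (Fin.snoc x a)

lemma swapChain_cons {N n : ℕ} (a b y : Fin N) (x' : Fin n → Fin N) :
    swapChain a b (Fin.cons y x') = Fin.cons b (Fin.cons y (Fin.snoc x' a)) := by
  unfold swapChain
  rw [show (Fin.snoc (Fin.cons y x') a : Fin (n+2) → Fin N) = Fin.cons y (Fin.snoc x' a) from
    (Fin.cons_snoc_eq_snoc_cons y x' a).symm]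

lemma pathA {N : ℕ} (M : Matrix (Fin N) (Fin N) ℂ) : ∀ (n : ℕ) (a b : Fin N),
    (∑ x : Fin n → Fin N, ∏ i : Fin (n + 1),
      M (swapChain a b x i.succ) (swapChain a b x i.castSucc))
    = (M ^ (n + 1)) a b := by
  intro n
  induction n with
  | zero =>
    intro a b
    simp [Fin.prod_univ_succ, swapChain]
    rfl
  | succ n ih =>
    intro a b
    rw [← (Fin.consEquiv (fun _ : Fin (n+1) => Fin N)).sum_comp]
    have key : ∀ (y : Fin N) (x' : Fin n → Fin N),
        (∏ i : Fin (n + 2),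
          M (swapChain a b (Fin.cons y x') i.succ) (swapChain a b (Fin.cons y x') i.castSucc))
        = M y b * ∏ i : Fin (n + 1),
            M (swapChain a y x' i.succ) (swapChain a y x' i.castSucc) := by
      intro y x'
      rw [swapChain_cons, Fin.prod_univ_succ]
      rfl
    calc (∑ p : Fin N × (Fin n → Fin N), ∏ i : Fin (n + 2),
          M (swapChain a b (Fin.consEquiv _ p) i.succ)
            (swapChain a b (Fin.consEquiv _ p) i.castSucc))
        = ∑ y : Fin N, ∑ x' : Fin n → Fin N, M y b * ∏ i : Fin (n + 1),
            M (swapChain a y x' i.succ) (swapChain a y x' i.castSucc) := by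
          rw [Fintype.sum_prod_type]
          exact Finset.sum_congr rfl fun y _ => Finset.sum_congr rfl fun x' _ => key y x'
      _ = ∑ y : Fin N, (M ^ (n+1)) a y * M y b := by
          apply Finset.sum_congr rfl
          intro y _
          rw [← Finset.mul_sum, ih a y, mul_comm]
      _ = (M ^ (n + 1 + 1)) a b := by
          rw [show (M ^ (n+1+1)) = M ^ (n+1) * M from pow_succ M (n+1), Matrix.mul_apply]

lemma consAdd {N n : ℕ} (a : Fin N) (x : Fin n → Fin N) (e : Fin (n + 1))
    (he : (e : ℕ) = 1 % (n + 1)) (t : Fin (n + 1)) :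
    (Fin.cons a x : Fin (n+1) → Fin N) (t + e) = (Fin.snoc x a : Fin (n+1) → Fin N) t := by
  rcases Nat.lt_or_ge (t : ℕ) n with h | h
  · have hn : 1 ≤ n := by omega
    have he1 : (e : ℕ) = 1 := by rw [he]; exact Nat.mod_eq_of_lt (by omega)
    have h1 : t + e = Fin.succ ⟨(t : ℕ), h⟩ := by
      apply Fin.ext
      have : ((t : ℕ) + (e : ℕ)) % (n + 1) = (t : ℕ) + 1 := by
        rw [he1]; exact Nat.mod_eq_of_lt (by omega)
      simpa [Fin.val_add] using this
    have h2 : t = Fin.castSucc ⟨(t : ℕ), h⟩ := by apply Fin.ext; simp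
    rw [h1, Fin.cons_succ]
    conv_rhs => rw [h2]
    rw [Fin.snoc_castSucc]
  · have ht : t = Fin.last n := by apply Fin.ext; have := t.isLt; simp; omega
    have h1 : t + e = 0 := by
      apply Fin.ext
      have : ((t : ℕ) + (e : ℕ)) % (n + 1) = 0 := by
        rcases n with _ | m
        · omega
        · have he1 : (e : ℕ) = 1 := by rw [he]; exact Nat.mod_eq_of_lt (by omega)
          have htv : (t : ℕ) = m + 1 := by rw [ht]; rfl
          rw [he1, htv]
          simp [Nat.mod_self]
      simpa [Fin.val_add] using this
    rw [h1, Fin.cons_zero, ht, Fin.snoc_last]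

lemma updCast {N n : ℕ} (a b : Fin N) (x : Fin n → Fin N) (t : Fin (n + 1)) :
    Function.update (Fin.cons a x : Fin (n+1) → Fin N) 0 b t
      = (Fin.cons b (Fin.snoc x a) : Fin (n+2) → Fin N) t.castSucc := by
  induction t using Fin.cases with
  | zero => simp
  | succ i =>
    rw [Function.update_of_ne (Fin.succ_ne_zero i), ← Fin.succ_castSucc]
    simp

lemma collapseH {N m : ℕ} (hm : 0 < m) (z : Fin m) (f : Fin m → Fin N)
    (G : (Fin m → Fin N) → ℂ) :
    (∑ h : Fin m → Fin N, if ∀ t ∈ univ.erase z, h t = f t then G h else 0)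
      = ∑ b : Fin N, G (Function.update f z b) := by
  classical
  rw [← Finset.sum_filter]
  have himg : (univ.filter (fun h : Fin m → Fin N => ∀ t ∈ univ.erase z, h t = f t))
      = Finset.image (fun b => Function.update f z b) univ := by
    ext h
    simp only [mem_filter, mem_univ, true_and, mem_image, mem_erase, and_imp]
    constructor
    · intro hh
      refine ⟨h z, ?_⟩
      funext t
      by_cases htz : t = z
      · subst htz; simp
      · rw [Function.update_of_ne htz]
        exact (hh t htz trivial).symm
    · rintro ⟨b, rfl⟩ t htz _
      exact Function.update_of_ne htz b f
  rw [himg, Finset.sum_image]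
  intro b _ b' _ hbb
  exact Function.update_injective f z hbb

/-- The generalized swap test identity: for the cyclic permutation operator `P` (sending the
basis vector indexed by `(a₁, …, a_k)` to the one indexed by `(a_k, a₁, …, a_{k-1})`), the
`k`-fold tensor power `ρ^{⊗k}`, and the observable `O ⊗ I^{⊗(k-1)}` on `(ℂ^N)^{⊗k}`, one has
`Tr(P · ρ^{⊗k} · (O ⊗ I^{⊗(k-1)})) = Tr(ρ^k · O)`. -/
theorem generalized_swap_test_identity (N k : ℕ) (hN : 1 ≤ N) (hk : 1 ≤ k)
    (ρ O : Matrix (Fin N) (Fin N) ℂ)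
    (rhoTensor : Matrix (Fin k → Fin N) (Fin k → Fin N) ℂ)
    (hrho : ∀ f g, rhoTensor f g = ∏ t, ρ (f t) (g t))
    (Otensor : Matrix (Fin k → Fin N) (Fin k → Fin N) ℂ)
    (hO : ∀ f g, Otensor f g
        = O (f ⟨0, hk⟩) (g ⟨0, hk⟩) *
            ∏ t ∈ univ.erase (⟨0, hk⟩ : Fin k), (if f t = g t then (1 : ℂ) else 0))
    (P : Matrix (Fin k → Fin N) (Fin k → Fin N) ℂ)
    (hP : ∀ f g, P f g = if (∀ t, f t = g (t - ⟨1 % k, Nat.mod_lt 1 hk⟩)) then (1 : ℂ) else 0) :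
    (P * rhoTensor * Otensor).trace = (ρ ^ k * O).trace := by
  classical
  obtain ⟨n, rfl⟩ : ∃ n, k = n + 1 := ⟨k - 1, by omega⟩
  set e : Fin (n + 1) := ⟨1 % (n + 1), Nat.mod_lt 1 hk⟩ with he_def
  have he : (e : ℕ) = 1 % (n + 1) := rfl
  have hz : (⟨0, hk⟩ : Fin (n + 1)) = 0 := rfl
  -- Step 1 : expand the trace
  have step1 : (P * rhoTensor * Otensor).trace
      = ∑ f : Fin (n+1) → Fin N, ∑ h : Fin (n+1) → Fin N, ∑ g : Fin (n+1) → Fin N,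
          P f g * rhoTensor g h * Otensor h f := by
    simp only [Matrix.trace, Matrix.diag, Matrix.mul_apply, Finset.sum_mul]
  -- Step 2 : collapse the sum over g
  have hand : ∀ f g : Fin (n+1) → Fin N,
      (∀ t, f t = g (t - e)) ↔ (fun s => f (s + e)) = g := by
    intro f g
    constructor
    · intro hc
      funext s
      have := hc (s + e)
      rwa [add_sub_cancel_right] at this
    · rintro rfl t
      show f t = f (t - e + e)
      rw [sub_add_cancel]
  have step2 : ∀ (f h : Fin (n+1) → Fin N),
      (∑ g : Fin (n+1) → Fin N, P f g * rhoTensor g h * Otensor h f)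
        = rhoTensor (fun s => f (s + e)) h * Otensor h f := by
    intro f h
    have hP' : ∀ g, P f g = if (fun s => f (s + e)) = g then (1:ℂ) else 0 := by
      intro g
      rw [hP]
      exact if_congr (hand f g) rfl rfl
    simp only [hP', ite_mul, one_mul, zero_mul]
    rw [Finset.sum_ite_eq univ (fun s => f (s + e))
      (fun g => rhoTensor g h * Otensor h f)]
    simp
  -- Step 3 : collapse the sum over h
  have step3 : ∀ f : Fin (n+1) → Fin N,
      (∑ h : Fin (n+1) → Fin N, rhoTensor (fun s => f (s + e)) h * Otensor h f)
        = ∑ b : Fin N,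
            (∏ t : Fin (n+1), ρ (f (t + e)) (Function.update f 0 b t)) * O b (f 0) := by
    intro f
    have expand : ∀ h : Fin (n+1) → Fin N,
        rhoTensor (fun s => f (s + e)) h * Otensor h f
          = if ∀ t ∈ univ.erase (0 : Fin (n+1)), h t = f t then
              (∏ t : Fin (n+1), ρ (f (t + e)) (h t)) * O (h 0) (f 0) else 0 := by
      intro h
      rw [hrho, hO, hz, Finset.prod_boole]
      by_cases hc : ∀ t ∈ univ.erase (0 : Fin (n+1)), h t = f t
      · simp [hc]
        try ring
      · simp [hc]
    simp only [expand]
    rw [collapseH hk 0 f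
      (fun h => (∏ t : Fin (n+1), ρ (f (t + e)) (h t)) * O (h 0) (f 0))]
    apply Finset.sum_congr rfl
    intro b _
    simp [Function.update_self]
  -- Step 4 : path sum
  have step4 : (∑ f : Fin (n+1) → Fin N, ∑ b : Fin N,
      (∏ t : Fin (n+1), ρ (f (t + e)) (Function.update f 0 b t)) * O b (f 0))
      = ∑ a : Fin N, ∑ b : Fin N, (ρ ^ (n+1)) a b * O b a := by
    rw [← (Fin.consEquiv (fun _ : Fin (n+1) => Fin N)).sum_comp, Fintype.sum_prod_type]
    apply Finset.sum_congr rfl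
    intro a _
    rw [Finset.sum_comm]
    apply Finset.sum_congr rfl
    intro b _
    have hfac : ∀ (x : Fin n → Fin N) (t : Fin (n+1)),
        ρ ((Fin.consEquiv (fun _ : Fin (n+1) => Fin N)) (a, x) (t + e))
          (Function.update ((Fin.consEquiv (fun _ : Fin (n+1) => Fin N)) (a, x)) 0 b t)
          = ρ (swapChain a b x t.succ) (swapChain a b x t.castSucc) := by
      intro x t
      have h1 : (Fin.consEquiv (fun _ : Fin (n+1) => Fin N)) (a, x) = Fin.cons a x := rfl
      rw [h1, consAdd a x e he t, updCast a b x t]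
      rfl
    calc (∑ x : Fin n → Fin N,
          (∏ t : Fin (n+1),
            ρ ((Fin.consEquiv (fun _ : Fin (n+1) => Fin N)) (a, x) (t + e))
              (Function.update ((Fin.consEquiv (fun _ : Fin (n+1) => Fin N)) (a, x)) 0 b t))
            * O b ((Fin.consEquiv (fun _ : Fin (n+1) => Fin N)) (a, x) 0))
        = (∑ x : Fin n → Fin N, ∏ t : Fin (n+1),
            ρ (swapChain a b x t.succ) (swapChain a b x t.castSucc)) * O b a := by
          rw [Finset.sum_mul]
          apply Finset.sum_congr rfl
          intro x _
          congr 1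
          exact Finset.prod_congr rfl fun t _ => hfac x t
      _ = (ρ ^ (n+1)) a b * O b a := by rw [pathA ρ n a b]
  -- conclude
  rw [step1]
  simp only [step2]
  rw [Finset.sum_congr rfl fun f _ => step3 f, step4]
  simp [Matrix.trace, Matrix.diag, Matrix.mul_apply]
end
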